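/- arXiv:math/0607660 — 2 statements merged into one kernel-verified Lean document; each statement's English description precedes it below -/
import Mathlib

section
/- Let R be a commutative Noetherian ring of prime characteristic p whose Frobenius endomorphism is finite and flat, and let a and b be ideals of R. Then for all real numbers c, c_1, c_2 ≥ 0: (1) if c_1 < c_2, then τ(a^{c_2}) ⊆ τ(a^{c_1}); (2) if a ⊆ b, then τ(a^c) ⊆ τ(b^c); (3) τ((a ∩ b)^c) ⊆ τ(a^c) ∩ τ(b^c) and τ(a^c) + τ(b^c) ⊆ τ((a + b)^c); (4) (subadditivity) τ((a·b)^c) ⊆ τ(a^c) · τ(b^c). -/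
/-!
Parts (1)–(3) only use that `b ↦ b^{[1/q]}` is monotone. Subadditivity rests on
`b ⊆ (b^{[1/q]})^{[q]}`: the `e`-th Frobenius is finite and flat over a Noetherian ring, hence
projective, and for a projective `R`-algebra `S` the coordinates of the elements of `b ⊆ S` with
respect to a dual basis generate the smallest ideal `J` of `R` with `b ⊆ JS`. Writing
`N = ⌈c p^e⌉`, this gives `(ab)^N = a^N b^N ⊆ ((a^N)^{[1/q]})^{[q]} ((b^N)^{[1/q]})^{[q]} ⊆
((a^N)^{[1/q]} (b^N)^{[1/q]})^{[q]}`, hence `((ab)^N)^{[1/q]} ⊆ (a^N)^{[1/q]} (b^N)^{[1/q]}`.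
-/

open Ideal

/-- The `q`-th bracket power `J^{[q]}` of an ideal: the ideal generated by
the `q`-th powers of the elements of `J`. -/
def bracketPow {R : Type*} [CommRing R] (J : Ideal R) (q : ℕ) : Ideal R :=
  Ideal.span ((fun x => x ^ q) '' (J : Set R))

/-- The ideal `b^{[1/q]}`: the smallest ideal `J` with `b ⊆ J^{[q]}`
(realized as the intersection of all such ideals). -/
def frobRoot {R : Type*} [CommRing R] (b : Ideal R) (q : ℕ) : Ideal R :=
  sInf {J : Ideal R | b ≤ bracketPow J q}

/-- The generalized test ideal `τ(a^c) = ⋃_{e ≥ 1} (a^{⌈c p^e⌉})^{[1/p^e]}`. -/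
noncomputable def testIdeal {R : Type*} [CommRing R] (p : ℕ) (a : Ideal R) (c : ℝ) : Ideal R :=
  ⨆ e : ℕ, frobRoot (a ^ ⌈c * (p : ℝ) ^ (e + 1)⌉₊) (p ^ (e + 1))

/-- `ν_a^J(q)`: the largest nonnegative integer `r` with `a^r ⊄ J^{[q]}`
(and `0` if there is no such `r`). -/
noncomputable def nuF {R : Type*} [CommRing R] (a J : Ideal R) (q : ℕ) : ℕ :=
  sSup {r : ℕ | ¬ a ^ r ≤ bracketPow J q}

/-- The F-threshold `c^J(a) = sup_{e ≥ 1} ν_a^J(p^e)/p^e`. -/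
noncomputable def FThreshold {R : Type*} [CommRing R] (p : ℕ) (a J : Ideal R) : ℝ :=
  ⨆ e : ℕ, (nuF a J (p ^ (e + 1)) : ℝ) / (p : ℝ) ^ (e + 1)

/-- `α > 0` is an F-jumping exponent of `a` if `τ(a^α) ≠ τ(a^c)` for all `0 ≤ c < α`. -/
def IsFJumpingExponent {R : Type*} [CommRing R] (p : ℕ) (a : Ideal R) (α : ℝ) : Prop :=
  0 < α ∧ ∀ c : ℝ, 0 ≤ c → c < α → testIdeal p a c ≠ testIdeal p a α

theorem Ideal.apply_mem_of_mem_map {R S : Type*} [CommRing R] [CommRing S] [Algebra R S]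
    (φ : S →ₗ[R] R) {J : Ideal R} {m : S} (hm : m ∈ J.map (algebraMap R S)) : φ m ∈ J := by
  have hm' : m ∈ J • (⊤ : Submodule R S) := by
    rw [Ideal.smul_top_eq_map]; exact hm
  have h : φ m ∈ (J • (⊤ : Submodule R S)).map φ := Submodule.mem_map_of_mem hm'
  rw [Submodule.map_smul''] at h
  exact Submodule.smul_le.mpr (fun r hr n _ => J.mul_mem_right n hr) h

theorem Ideal.le_map_sInf_of_projective {R S : Type*} [CommRing R] [CommRing S] [Algebra R S]
    [Module.Projective R S] (b : Ideal S) :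
    b ≤ (sInf {J : Ideal R | b ≤ J.map (algebraMap R S)}).map (algebraMap R S) := by
  obtain ⟨s, hs⟩ := Module.projective_def.mp ‹_›
  intro m hm
  have hcoord : ∀ x, s m x ∈ sInf {J : Ideal R | b ≤ J.map (algebraMap R S)} :=
    fun x => Submodule.mem_sInf.mpr fun J hJ =>
      Ideal.apply_mem_of_mem_map (Finsupp.lapply x ∘ₗ s) (hJ hm)
  rw [← hs m, Finsupp.linearCombination_apply]
  refine Ideal.sum_mem _ fun x _ => ?_
  simp only [id, Algebra.smul_def]
  exact Ideal.mul_mem_right _ _ (Ideal.mem_map_of_mem _ (hcoord x))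

theorem RingHom.Finite.pow {R : Type*} [CommRing R] {f : R →+* R} (hf : f.Finite) (n : ℕ) :
    (f ^ n).Finite := by
  induction n with
  | zero => exact RingHom.Finite.id R
  | succ n ih => rw [pow_succ, RingHom.mul_def]; exact ih.comp hf

theorem RingHom.Flat.pow {R : Type*} [CommRing R] {f : R →+* R} (hf : f.Flat) (n : ℕ) :
    (f ^ n).Flat := by
  induction n with
  | zero => exact RingHom.Flat.id R
  | succ n ih => rw [pow_succ, RingHom.mul_def]; exact hf.comp ih

theorem RingHom.le_map_sInf_of_finite_of_flat {R S : Type*} [CommRing R] [CommRing S]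
    [IsNoetherianRing R] {f : R →+* S} (hfin : f.Finite) (hflat : f.Flat) (b : Ideal S) :
    b ≤ (sInf {J : Ideal R | b ≤ J.map f}).map f := by
  algebraize [f]
  have : Module.FinitePresentation R S := Module.finitePresentation_of_finite R S
  have : Module.Projective R S := Module.Flat.projective_of_finitePresentation
  exact Ideal.le_map_sInf_of_projective b

section Bracket

variable {R : Type*} [CommRing R]

theorem bracketPow_mul_le (A B : Ideal R) (q : ℕ) :
    bracketPow A q * bracketPow B q ≤ bracketPow (A * B) q := by
  rw [bracketPow, bracketPow, Ideal.span_mul_span, Ideal.span_le]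
  rintro _ ⟨_, ⟨u, hu, rfl⟩, _, ⟨v, hv, rfl⟩, rfl⟩
  exact Ideal.subset_span ⟨u * v, Ideal.mul_mem_mul hu hv, mul_pow u v q⟩

theorem frobRoot_mono {b c : Ideal R} (h : b ≤ c) (q : ℕ) : frobRoot b q ≤ frobRoot c q :=
  sInf_le_sInf fun _ hJ => h.trans hJ

theorem frobRoot_mul_le {A B : Ideal R} {q : ℕ} (hA : A ≤ bracketPow (frobRoot A q) q)
    (hB : B ≤ bracketPow (frobRoot B q) q) :
    frobRoot (A * B) q ≤ frobRoot A q * frobRoot B q :=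
  sInf_le ((Ideal.mul_mono hA hB).trans (bracketPow_mul_le _ _ q))

theorem testIdeal_mono (p : ℕ) {a b : Ideal R} (h : a ≤ b) (c : ℝ) :
    testIdeal p a c ≤ testIdeal p b c :=
  iSup_mono fun _ => frobRoot_mono (Ideal.pow_right_mono h _) _

theorem testIdeal_anti (p : ℕ) (a : Ideal R) {c₁ c₂ : ℝ} (h : c₁ ≤ c₂) :
    testIdeal p a c₂ ≤ testIdeal p a c₁ :=
  iSup_mono fun _ => frobRoot_mono (Ideal.pow_le_pow_right <|
    Nat.ceil_le_ceil <| mul_le_mul_of_nonneg_right h (by positivity)) _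

end Bracket

section Frobenius

variable {R : Type*} [CommRing R] (p : ℕ) [Fact p.Prime] [CharP R p]

theorem bracketPow_pow_eq_map (J : Ideal R) (n : ℕ) :
    bracketPow J (p ^ n) = J.map (frobenius R p ^ n) := by
  rw [← iterateFrobenius_eq_pow]
  rfl

theorem le_bracketPow_frobRoot [IsNoetherianRing R] (hfin : (frobenius R p).Finite)
    (hflat : (frobenius R p).Flat) (b : Ideal R) (n : ℕ) :
    b ≤ bracketPow (frobRoot b (p ^ n)) (p ^ n) := by
  simp only [frobRoot, bracketPow_pow_eq_map]
  exact RingHom.le_map_sInf_of_finite_of_flat (hfin.pow n) (hflat.pow n) b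

theorem testIdeal_mul_le [IsNoetherianRing R] (hfin : (frobenius R p).Finite)
    (hflat : (frobenius R p).Flat) (a b : Ideal R) (c : ℝ) :
    testIdeal p (a * b) c ≤ testIdeal p a c * testIdeal p b c := by
  refine iSup_le fun e => ?_
  rw [mul_pow]
  exact (frobRoot_mul_le (le_bracketPow_frobRoot p hfin hflat _ _)
    (le_bracketPow_frobRoot p hfin hflat _ _)).trans <| Ideal.mul_mono
    (le_iSup (fun e => frobRoot (a ^ ⌈c * (p : ℝ) ^ (e + 1)⌉₊) (p ^ (e + 1))) e)
    (le_iSup (fun e => frobRoot (b ^ ⌈c * (p : ℝ) ^ (e + 1)⌉₊) (p ^ (e + 1))) e)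

end Frobenius

/-- basic properties of generalized test ideals. -/
theorem stmt5_testIdeal_basic_properties
    {R : Type*} [CommRing R] [IsNoetherianRing R] (p : ℕ) [Fact p.Prime] [CharP R p]
    (hfin : (frobenius R p).Finite) (hflat : (frobenius R p).Flat)
    (a b : Ideal R) :
    (∀ c₁ c₂ : ℝ, 0 ≤ c₁ → c₁ < c₂ → testIdeal p a c₂ ≤ testIdeal p a c₁) ∧
    (∀ c : ℝ, 0 ≤ c → a ≤ b → testIdeal p a c ≤ testIdeal p b c) ∧
    (∀ c : ℝ, 0 ≤ c → testIdeal p (a ⊓ b) c ≤ testIdeal p a c ⊓ testIdeal p b c) ∧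
    (∀ c : ℝ, 0 ≤ c → testIdeal p a c + testIdeal p b c ≤ testIdeal p (a + b) c) ∧
    (∀ c : ℝ, 0 ≤ c → testIdeal p (a * b) c ≤ testIdeal p a c * testIdeal p b c) :=
  ⟨fun _ _ _ h => testIdeal_anti p a h.le,
   fun c _ h => testIdeal_mono p h c,
   fun c _ => le_inf (testIdeal_mono p inf_le_left c) (testIdeal_mono p inf_le_right c),
   fun c _ => sup_le (testIdeal_mono p le_sup_left c) (testIdeal_mono p le_sup_right c),
   fun c _ => testIdeal_mul_le p hfin hflat a b c⟩
end

section
/- Let R be a commutative Noetherian ring of prime characteristic p whose Frobenius endomorphism is finite and flat, let a be an ideal of R, and let J be an ideal of R whose radical contains a. Then: (1) for every e ≥ 1 and every nonnegative integer r, if a^r ⊄ J^{[p^e]} then a^{pr} ⊄ J^{[p^{e+1}]}; consequently ν_a^J(p^e)/p^e ≤ ν_a^J(p^{e+1})/p^{e+1} for all e ≥ 1; (2) if a can be generated by s elements and ℓ is a positive integer with a^ℓ ⊆ J, then ν_a^J(p^e) ≤ ℓ(s(p^e − 1) + 1) − 1 for every e ≥ 1, and hence the F-threshold c^J(a) = sup_{e≥1}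 ν_a^J(p^e)/p^e satisfies c^J(a) ≤ sℓ; in particular c^J(a) is a finite real number. -/
open Ideal

/-! Flatness of the Frobenius `F` upgrades to faithful flatness, since `F` fixes every prime
ideal; hence `I^{[p]} ⊆ K^{[p]}` forces `I ⊆ K`. As `(a^r)^{[p]} ⊆ a^{pr}` and
`J^{[p^{e+1}]} ⊆ (J^{[p^e]})^{[p]}`, this gives (1), and (1) applied to `r = ν(p^e)` gives the
monotonicity of `ν(p^e)/p^e`. For (2), the pigeonhole principle, in the form
`(I + K)^{m+n-1} ⊆ I^m + K^n` iterated over the generators, gives `a^{s(q-1)+1} ⊆ a^{[q]}`, so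
`a^{ℓ(s(q-1)+1)} ⊆ (a^{[q]})^ℓ ⊆ (a^ℓ)^{[q]} ⊆ J^{[q]}`; the bound on `c^J(a)` follows termwise. -/

theorem Ideal.sup_pow_add_pred_le {R : Type*} [CommSemiring R] (I J : Ideal R) (n m : ℕ) :
    (I ⊔ J) ^ (n + m - 1) ≤ I ^ n ⊔ J ^ m := by
  rw [← Ideal.add_eq_sup, ← Ideal.add_eq_sup, add_pow, Ideal.sum_eq_sup]
  refine Finset.sup_le fun i hi => ?_
  by_cases hn : n ≤ i
  · exact Ideal.mul_le_left.trans (Ideal.mul_le_left.trans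
      ((Ideal.pow_le_pow_right hn).trans le_sup_left))
  · refine Ideal.mul_le_left.trans (Ideal.mul_le_right.trans
      ((Ideal.pow_le_pow_right ?_).trans le_sup_right))
    rw [Finset.mem_range] at hi
    omega

theorem Ideal.span_image_pow_le_span_image_pow {R ι : Type*} [CommSemiring R] (g : ι → R) {q : ℕ}
    (hq : 1 ≤ q) (t : Finset ι) :
    Ideal.span (g '' t) ^ (t.card * (q - 1) + 1) ≤ Ideal.span ((fun i => g i ^ q) '' t) := by
  classical
  induction t using Finset.induction_on with
  | empty => simp
  | insert i t hi ih =>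
    rw [Finset.card_insert_of_notMem hi, Finset.coe_insert, Set.image_insert_eq,
      Set.image_insert_eq, Ideal.span_insert, Ideal.span_insert]
    calc (Ideal.span {g i} ⊔ Ideal.span (g '' t)) ^ ((t.card + 1) * (q - 1) + 1)
        = (Ideal.span {g i} ⊔ Ideal.span (g '' t)) ^ (q + (t.card * (q - 1) + 1) - 1) := by
          rw [add_one_mul]; congr 1; omega
      _ ≤ Ideal.span {g i} ^ q ⊔ Ideal.span (g '' t) ^ (t.card * (q - 1) + 1) :=
          Ideal.sup_pow_add_pred_le _ _ _ _
      _ ≤ Ideal.span {g i ^ q} ⊔ Ideal.span ((fun i => g i ^ q) '' t) := by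
          rw [Ideal.span_singleton_pow]
          exact sup_le_sup_left ih _

section BracketPow

variable {R : Type*} [CommRing R]

theorem pow_mem_bracketPow {J : Ideal R} {y : R} (hy : y ∈ J) (q : ℕ) : y ^ q ∈ bracketPow J q :=
  Ideal.subset_span ⟨y, hy, rfl⟩

theorem bracketPow_mono {I J : Ideal R} (h : I ≤ J) (q : ℕ) : bracketPow I q ≤ bracketPow J q :=
  Ideal.span_mono (Set.image_mono h)

theorem bracketPow_le_pow (I : Ideal R) (q : ℕ) : bracketPow I q ≤ I ^ q :=
  Ideal.span_le.2 <| by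
    rintro _ ⟨x, hx, rfl⟩
    exact Ideal.pow_mem_pow hx q

theorem bracketPow_mul_le_bracketPow_bracketPow (J : Ideal R) (m n : ℕ) :
    bracketPow J (m * n) ≤ bracketPow (bracketPow J m) n :=
  Ideal.span_le.2 <| by
    rintro _ ⟨y, hy, rfl⟩
    simp only [SetLike.mem_coe, pow_mul]
    exact pow_mem_bracketPow (pow_mem_bracketPow hy m) n

theorem bracketPow_mul_bracketPow_le (I J : Ideal R) (q : ℕ) :
    bracketPow I q * bracketPow J q ≤ bracketPow (I * J) q := by
  rw [bracketPow, bracketPow, Ideal.span_mul_span', Ideal.span_le]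
  rintro _ ⟨_, ⟨x, hx, rfl⟩, _, ⟨y, hy, rfl⟩, rfl⟩
  simp only [SetLike.mem_coe, ← mul_pow]
  exact pow_mem_bracketPow (Ideal.mul_mem_mul hx hy) q

theorem bracketPow_pow_le (I : Ideal R) (q n : ℕ) :
    bracketPow I q ^ n ≤ bracketPow (I ^ n) q := by
  induction n with
  | zero => simpa [eq_top_iff_one] using pow_mem_bracketPow (Submodule.mem_top : (1 : R) ∈ ⊤) q
  | succ n ih =>
    rw [pow_succ, pow_succ]
    exact (Ideal.mul_mono_left ih).trans (bracketPow_mul_bracketPow_le _ _ q)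

theorem span_range_pow_le_bracketPow {s : ℕ} (g : Fin s → R) {q : ℕ} (hq : 1 ≤ q) :
    Ideal.span (Set.range g) ^ (s * (q - 1) + 1) ≤ bracketPow (Ideal.span (Set.range g)) q := by
  have h := Ideal.span_image_pow_le_span_image_pow g hq Finset.univ
  rw [Finset.coe_univ, Set.image_univ, Set.image_univ, Finset.card_univ, Fintype.card_fin] at h
  refine h.trans (Ideal.span_le.2 ?_)
  rintro _ ⟨j, rfl⟩
  exact pow_mem_bracketPow (Ideal.subset_span (Set.mem_range_self j)) q

theorem span_range_pow_mul_le_bracketPow {s ℓ q : ℕ} {g : Fin s → R} {J : Ideal R}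
    (hJ : Ideal.span (Set.range g) ^ ℓ ≤ J) (hq : 1 ≤ q) :
    Ideal.span (Set.range g) ^ (ℓ * (s * (q - 1) + 1)) ≤ bracketPow J q :=
  calc Ideal.span (Set.range g) ^ (ℓ * (s * (q - 1) + 1))
      = (Ideal.span (Set.range g) ^ (s * (q - 1) + 1)) ^ ℓ := by rw [← pow_mul, mul_comm]
    _ ≤ bracketPow (Ideal.span (Set.range g)) q ^ ℓ :=
        Ideal.pow_right_mono (span_range_pow_le_bracketPow g hq) ℓ
    _ ≤ bracketPow (Ideal.span (Set.range g) ^ ℓ) q := bracketPow_pow_le _ q ℓ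
    _ ≤ bracketPow J q := bracketPow_mono hJ q

end BracketPow

theorem RingHom.FaithfullyFlat.comap_map_eq {R S : Type*} [CommRing R] [CommRing S]
    {f : R →+* S} (hf : f.FaithfullyFlat) (I : Ideal R) : (I.map f).comap f = I := by
  algebraize [f]
  exact I.comap_map_eq_self_of_faithfullyFlat

section Frobenius

variable {R : Type*} [CommRing R] (p : ℕ) [Fact p.Prime] [CharP R p]

theorem bracketPow_eq_map_frobenius (K : Ideal R) : bracketPow K p = K.map (frobenius R p) := by
  rw [bracketPow, Ideal.map]
  congr

theorem frobenius_faithfullyFlat (hflat : (frobenius R p).Flat) :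
    (frobenius R p).FaithfullyFlat := by
  refine RingHom.FaithfullyFlat.iff_flat_and_comap_surjective.2 ⟨hflat, fun P => ⟨P, ?_⟩⟩
  ext x
  simp [frobenius_def, P.isPrime.pow_mem_iff_mem p (Fact.out : p.Prime).pos]

theorem le_of_bracketPow_le_bracketPow (hflat : (frobenius R p).Flat) {I K : Ideal R}
    (h : bracketPow I p ≤ bracketPow K p) : I ≤ K := by
  rw [bracketPow_eq_map_frobenius, bracketPow_eq_map_frobenius] at h
  rw [← (frobenius_faithfullyFlat p hflat).comap_map_eq I,
    ← (frobenius_faithfullyFlat p hflat).comap_map_eq K]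
  exact Ideal.comap_mono h

theorem pow_le_bracketPow_of_pow_mul_le (hflat : (frobenius R p).Flat) {a J : Ideal R} {q r : ℕ}
    (h : a ^ (p * r) ≤ bracketPow J (q * p)) : a ^ r ≤ bracketPow J q := by
  refine le_of_bracketPow_le_bracketPow p hflat ?_
  calc bracketPow (a ^ r) p ≤ (a ^ r) ^ p := bracketPow_le_pow _ p
    _ = a ^ (p * r) := by rw [← pow_mul, mul_comm]
    _ ≤ bracketPow J (q * p) := h
    _ ≤ bracketPow (bracketPow J q) p := bracketPow_mul_le_bracketPow_bracketPow J q p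

end Frobenius

section Nu

variable {R : Type*} [CommRing R] {a J : Ideal R} {q n : ℕ}

theorem bddAbove_setOf_not_pow_le (h : a ^ n ≤ bracketPow J q) :
    BddAbove {r : ℕ | ¬ a ^ r ≤ bracketPow J q} :=
  ⟨n, fun _ hr => not_lt.1 fun hnr => hr ((Ideal.pow_le_pow_right hnr.le).trans h)⟩

theorem le_nuF (h : a ^ n ≤ bracketPow J q) {r : ℕ} (hr : ¬ a ^ r ≤ bracketPow J q) :
    r ≤ nuF a J q :=
  le_csSup (bddAbove_setOf_not_pow_le h) hr

theorem nuF_lt (hn : 0 < n) (h : a ^ n ≤ bracketPow J q) : nuF a J q < n := by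
  refine Nat.lt_of_le_sub_one hn (csSup_le' fun r (hr : ¬ _) => ?_)
  exact Nat.le_sub_one_of_lt (not_le.1 fun hnr => hr ((Ideal.pow_le_pow_right hnr).trans h))

theorem mul_nuF_le {k m q' : ℕ} (h : a ^ n ≤ bracketPow J q) (h' : a ^ m ≤ bracketPow J q')
    (hk : ∀ r, ¬ a ^ r ≤ bracketPow J q → ¬ a ^ (k * r) ≤ bracketPow J q') :
    k * nuF a J q ≤ nuF a J q' := by
  rcases Set.eq_empty_or_nonempty {r : ℕ | ¬ a ^ r ≤ bracketPow J q} with hempty | hne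
  · simp [nuF, hempty]
  · exact le_nuF h' (hk _ (Nat.sSup_mem hne (bddAbove_setOf_not_pow_le h)))

theorem nuF_span_range_lt {s ℓ : ℕ} {g : Fin s → R} (hℓ : 1 ≤ ℓ)
    (hJ : Ideal.span (Set.range g) ^ ℓ ≤ J) (hq : 1 ≤ q) :
    nuF (Ideal.span (Set.range g)) J q < ℓ * (s * (q - 1) + 1) :=
  nuF_lt (by positivity) (span_range_pow_mul_le_bracketPow hJ hq)

theorem nuF_span_range_le {s ℓ : ℕ} {g : Fin s → R} (hℓ : 1 ≤ ℓ)
    (hJ : Ideal.span (Set.range g) ^ ℓ ≤ J) (hq : 1 ≤ q) :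
    nuF (Ideal.span (Set.range g)) J q ≤ s * ℓ * q := by
  rcases s.eq_zero_or_pos with rfl | hs
  · -- With no generators the ideal is `⊥`, so the sharper bound for `ℓ = 1` applies.
    have h := nuF_span_range_lt (J := J) (ℓ := 1) (g := g) le_rfl
      (by simp [Set.range_eq_empty]) hq
    rw [zero_mul, zero_mul]
    omega
  · have h := nuF_span_range_lt hℓ hJ hq
    obtain ⟨q, rfl⟩ : ∃ q', q = q' + 1 := ⟨q - 1, by omega⟩
    rw [Nat.add_sub_cancel] at h
    nlinarith

end Nu

theorem stmt12_nu_and_threshold_general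
    {R : Type*} [CommRing R] [IsNoetherianRing R] (p : ℕ) [Fact p.Prime] [CharP R p]
    (hflat : (frobenius R p).Flat)
    (a J : Ideal R) (hrad : a ≤ J.radical) :
    (∀ e : ℕ, 1 ≤ e → ∀ r : ℕ, ¬ a ^ r ≤ bracketPow J (p ^ e) →
        ¬ a ^ (p * r) ≤ bracketPow J (p ^ (e + 1))) ∧
    (∀ e : ℕ, 1 ≤ e →
      (nuF a J (p ^ e) : ℝ) / (p : ℝ) ^ e ≤
        (nuF a J (p ^ (e + 1)) : ℝ) / (p : ℝ) ^ (e + 1)) ∧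
    (∀ (s ℓ : ℕ) (g : Fin s → R), a = Ideal.span (Set.range g) → 1 ≤ ℓ → a ^ ℓ ≤ J →
      (∀ e : ℕ, 1 ≤ e → nuF a J (p ^ e) ≤ ℓ * (s * (p ^ e - 1) + 1) - 1) ∧
      FThreshold p a J ≤ (s : ℝ) * (ℓ : ℝ)) := by
  have hp : 0 < p := (Fact.out : p.Prime).pos
  have hq : ∀ e, 1 ≤ p ^ e := fun e => Nat.one_le_pow _ _ hp
  have hfrob : ∀ e r, ¬ a ^ r ≤ bracketPow J (p ^ e) →
      ¬ a ^ (p * r) ≤ bracketPow J (p ^ (e + 1)) :=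
    fun e r hr h => hr (pow_le_bracketPow_of_pow_mul_le p hflat (by rwa [← pow_succ]))
  obtain ⟨s₀, g₀, hg₀⟩ :=
    Submodule.fg_iff_exists_fin_generating_family.1 (IsNoetherian.noetherian a)
  obtain ⟨n, hn⟩ := Ideal.exists_pow_le_of_le_radical_of_fg hrad (IsNoetherian.noetherian a)
  have hbound : ∀ e, a ^ (n * (s₀ * (p ^ e - 1) + 1)) ≤ bracketPow J (p ^ e) := fun e => by
    rw [← hg₀] at hn ⊢
    exact span_range_pow_mul_le_bracketPow hn (hq e)
  refine ⟨fun e _ => hfrob e, fun e _ => ?_, fun s ℓ g hga hℓ hJ => ?_⟩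
  · have hmul := mul_nuF_le (hbound e) (hbound (e + 1)) (hfrob e)
    rw [pow_succ' (p : ℝ), ← div_div, div_le_div_iff_of_pos_right (by positivity),
      le_div_iff₀ (by positivity), mul_comm]
    exact_mod_cast hmul
  · subst hga
    refine ⟨fun e _ => Nat.le_sub_one_of_lt (nuF_span_range_lt hℓ hJ (hq e)),
      ciSup_le fun e => ?_⟩
    rw [div_le_iff₀ (by positivity)]
    exact_mod_cast nuF_span_range_le hℓ hJ (hq (e + 1))

/-- basic properties of `ν_a^J(p^e)` and finiteness of the
F-threshold `c^J(a)`. -/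
theorem stmt12_nu_and_threshold
    {R : Type*} [CommRing R] [IsNoetherianRing R] (p : ℕ) [Fact p.Prime] [CharP R p]
    (hfin : (frobenius R p).Finite) (hflat : (frobenius R p).Flat)
    (a J : Ideal R) (hrad : a ≤ J.radical) :
    (∀ e : ℕ, 1 ≤ e → ∀ r : ℕ, ¬ a ^ r ≤ bracketPow J (p ^ e) →
        ¬ a ^ (p * r) ≤ bracketPow J (p ^ (e + 1))) ∧
    (∀ e : ℕ, 1 ≤ e →
      (nuF a J (p ^ e) : ℝ) / (p : ℝ) ^ e ≤
        (nuF a J (p ^ (e + 1)) : ℝ) / (p : ℝ) ^ (e + 1)) ∧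
    (∀ (s ℓ : ℕ) (g : Fin s → R), a = Ideal.span (Set.range g) → 1 ≤ ℓ → a ^ ℓ ≤ J →
      (∀ e : ℕ, 1 ≤ e → nuF a J (p ^ e) ≤ ℓ * (s * (p ^ e - 1) + 1) - 1) ∧
      FThreshold p a J ≤ (s : ℝ) * (ℓ : ℝ)) :=
  stmt12_nu_and_threshold_general p hflat a J hrad
end
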